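/- Let I ⊆ ℝ be an open interval and f, g : I → ℝ smooth with f > 0 and g' > 0 on I. Let k₁, k₂ ∈ ℝ, k₃ ≠ 0, and define T(t,x) = t + k₁, X̃(t,x) = g(x) + k₂, Ũ(t,x,u) = k₃·u·√(f(x)·g'(x)³) on ℝ × I × ℝ. Then the following identities hold at every point: X₁(T) = 1, X₁(X̃) = 0, X₁(Ũ) = 0; X₂(T) = 0, X₂(X̃) = 0, X₂(Ũ) = Ũ; X₄(T) = 0, X₄(X̃) = 2, X₄(Ũ) = 0; and (X₃ + 4k₁·X₁ + k₂·X₄)(T) = 4T, (X₃ + 4k₁·X₁ + k₂·X₄)(X̃) = 2X̃, (X₃ + 4k₁·X₁ + k₂·X₄)(Ũ) = 0. Hence the change of variables maps the vector fields X₁, X₂, X₄, X₃ + 4k₁X₁ + k₂X₄ to ∂_T, U∂_U, 2∂_X, 4T∂_T + 2X∂_X respectively. -/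

import Mathlib

/-! The combination `X₃ + 4k₁X₁ + k₂X₄` equals `4(t + k₁)·X₁ + (g + k₂)·X₄`, so its values on `T`, `X̃`, `Ũ`
are read off from those of `X₁` and `X₄`. The only computation with content is `X₄(Ũ) = 0`: writing
`p = f·g'³`, the square root satisfies `(√p)' = √p · p'/(2p)`, and `p'/p = f'/f + 3g''/g'` is exactly
what the zeroth-order coefficient of `X₄` cancels. -/

/-- The operator `X₁F = ∂F/∂t`. -/
noncomputable def X1 (F : ℝ → ℝ → ℝ → ℝ) (t x u : ℝ) : ℝ :=
  deriv (fun s => F s x u) t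

/-- The operator `X₂F = u·∂F/∂u`. -/
noncomputable def X2 (F : ℝ → ℝ → ℝ → ℝ) (t x u : ℝ) : ℝ :=
  u * deriv (fun v => F t x v) u

/-- The operator `X₃F = 4t·F_t + (2g/g')·F_x − (f'g/(fg') + 3g·g''/g'²)·u·F_u`. -/
noncomputable def X3 (f g : ℝ → ℝ) (F : ℝ → ℝ → ℝ → ℝ) (t x u : ℝ) : ℝ :=
  4 * t * deriv (fun s => F s x u) t
    + (2 * g x / deriv g x) * deriv (fun y => F t y u) x
    - (deriv f x * g x / (f x * deriv g x)
        + 3 * g x * (deriv^[2] g x) / (deriv g x)^2) * u * deriv (fun v => F t x v) u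

/-- The operator `X₄F = (2/g')·F_x − (f'/(fg') + 3g''/g'²)·u·F_u`. -/
noncomputable def X4 (f g : ℝ → ℝ) (F : ℝ → ℝ → ℝ → ℝ) (t x u : ℝ) : ℝ :=
  (2 / deriv g x) * deriv (fun y => F t y u) x
    - (deriv f x / (f x * deriv g x)
        + 3 * (deriv^[2] g x) / (deriv g x)^2) * u * deriv (fun v => F t x v) u

lemma X3_eq (f g : ℝ → ℝ) (F : ℝ → ℝ → ℝ → ℝ) (t x u : ℝ) :
    X3 f g F t x u = 4 * t * X1 F t x u + g x * X4 f g F t x u := by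
  simp only [X3, X1, X4]
  ring

lemma X3_add_X1_add_X4_eq (f g : ℝ → ℝ) (F : ℝ → ℝ → ℝ → ℝ) (k₁ k₂ t x u : ℝ) :
    X3 f g F t x u + 4 * k₁ * X1 F t x u + k₂ * X4 f g F t x u
      = 4 * (t + k₁) * X1 F t x u + (g x + k₂) * X4 f g F t x u := by
  rw [X3_eq]
  ring

lemma HasDerivAt.sqrt_of_pos {p : ℝ → ℝ} {p' x : ℝ} (hp : HasDerivAt p p' x) (hpx : 0 < p x) :
    HasDerivAt (fun y => √(p y)) (√(p x) * (p' / p x) / 2) x := by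
  convert hp.sqrt hpx.ne' using 1
  have hs : 0 < √(p x) := Real.sqrt_pos.2 hpx
  field_simp
  rw [Real.sq_sqrt hpx.le, mul_comm]

lemma X4_mul_sqrt_eq_zero {f g : ℝ → ℝ} {x : ℝ} (k t u : ℝ)
    (hf : HasDerivAt f (deriv f x) x) (hg : HasDerivAt (deriv g) (deriv^[2] g x) x)
    (hfx : 0 < f x) (hgx : 0 < deriv g x) :
    X4 f g (fun _ y v => k * v * √(f y * deriv g y ^ 3)) t x u = 0 := by
  have hpx : 0 < f x * deriv g x ^ 3 := by positivity
  have hp := hf.mul (hg.pow 3)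
  have hx : deriv (fun y => k * u * √(f y * deriv g y ^ 3)) x
      = k * u * (√(f x * deriv g x ^ 3)
          * ((deriv f x * deriv g x ^ 3 + f x * (3 * deriv g x ^ 2 * deriv^[2] g x))
            / (f x * deriv g x ^ 3)) / 2) := by
    simpa using ((hp.sqrt_of_pos hpx).const_mul (k * u)).deriv
  have hu : deriv (fun v => k * v * √(f x * deriv g x ^ 3)) u = k * √(f x * deriv g x ^ 3) := by
    simp
  simp only [X4, hx, hu]
  field_simp
  ring

theorem statement1_general
    (I : Set ℝ) (hIopen : IsOpen I)
    (f g : ℝ → ℝ)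
    (hf : ContDiffOn ℝ (⊤ : ℕ∞) f I) (hg : ContDiffOn ℝ (⊤ : ℕ∞) g I)
    (hfpos : ∀ x ∈ I, 0 < f x) (hg' : ∀ x ∈ I, 0 < deriv g x)
    (k₁ k₂ k₃ : ℝ)
    (T Xt Ut : ℝ → ℝ → ℝ → ℝ)
    (hT : T = fun t _ _ => t + k₁)
    (hXt : Xt = fun _ x _ => g x + k₂)
    (hUt : Ut = fun _ x u => k₃ * u * Real.sqrt (f x * (deriv g x)^3)) :
    ∀ t : ℝ, ∀ x ∈ I, ∀ u : ℝ,
      X1 T t x u = 1 ∧ X1 Xt t x u = 0 ∧ X1 Ut t x u = 0 ∧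
      X2 T t x u = 0 ∧ X2 Xt t x u = 0 ∧ X2 Ut t x u = Ut t x u ∧
      X4 f g T t x u = 0 ∧ X4 f g Xt t x u = 2 ∧ X4 f g Ut t x u = 0 ∧
      X3 f g T t x u + 4 * k₁ * X1 T t x u + k₂ * X4 f g T t x u = 4 * T t x u ∧
      X3 f g Xt t x u + 4 * k₁ * X1 Xt t x u + k₂ * X4 f g Xt t x u = 2 * Xt t x u ∧
      X3 f g Ut t x u + 4 * k₁ * X1 Ut t x u + k₂ * X4 f g Ut t x u = 0 := by
  intro t x hx u
  subst hT hXt hUt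
  have hI : I ∈ nhds x := hIopen.mem_nhds hx
  have hgx := hg' x hx
  have hf' : HasDerivAt f (deriv f x) x :=
    ((hf.differentiableOn (by simp)).differentiableAt hI).hasDerivAt
  have hg'' : HasDerivAt (deriv g) (deriv^[2] g x) x :=
    (((hg.deriv_of_isOpen (m := 1) hIopen (WithTop.coe_le_coe.2 le_top)).differentiableOn
      (by simp)).differentiableAt hI).hasDerivAt
  have hX1T : X1 (fun t _ _ => t + k₁) t x u = 1 := by simp [X1]
  have hX4T : X4 f g (fun t _ _ => t + k₁) t x u = 0 := by simp [X4]
  have hX1X : X1 (fun _ x _ => g x + k₂) t x u = 0 := by simp [X1]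
  have hX4X : X4 f g (fun _ x _ => g x + k₂) t x u = 2 := by
    simp only [X4, deriv_add_const, deriv_const, mul_zero, sub_zero]
    field_simp
  have hX1U : X1 (fun _ x u => k₃ * u * √(f x * deriv g x ^ 3)) t x u = 0 := by simp [X1]
  have hX4U := X4_mul_sqrt_eq_zero k₃ t u hf' hg'' (hfpos x hx) hgx
  refine ⟨hX1T, hX1X, hX1U, ?_, ?_, ?_, hX4T, hX4X, hX4U, ?_, ?_, ?_⟩
  · simp [X2]
  · simp [X2]
  · simp [X2]
    ring
  · rw [X3_add_X1_add_X4_eq, hX1T, hX4T]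
    ring
  · rw [X3_add_X1_add_X4_eq, hX1X, hX4X]
    ring
  · rw [X3_add_X1_add_X4_eq, hX1U, hX4U]
    ring

/-- the change of variables `T = t + k₁`, `X̃ = g(x) + k₂`,
`Ũ = k₃·u·√(f·g'³)` maps `X₁, X₂, X₄, X₃ + 4k₁X₁ + k₂X₄` to
`∂_T, U∂_U, 2∂_X, 4T∂_T + 2X∂_X` respectively. -/
theorem statement1
    (I : Set ℝ) (hIopen : IsOpen I) (hIinterval : I.OrdConnected)
    (f g : ℝ → ℝ)
    (hf : ContDiffOn ℝ (⊤ : ℕ∞) f I) (hg : ContDiffOn ℝ (⊤ : ℕ∞) g I)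
    (hfpos : ∀ x ∈ I, 0 < f x) (hg' : ∀ x ∈ I, 0 < deriv g x)
    (k₁ k₂ k₃ : ℝ) (hk₃ : k₃ ≠ 0)
    (T Xt Ut : ℝ → ℝ → ℝ → ℝ)
    (hT : T = fun t _ _ => t + k₁)
    (hXt : Xt = fun _ x _ => g x + k₂)
    (hUt : Ut = fun _ x u => k₃ * u * Real.sqrt (f x * (deriv g x)^3)) :
    ∀ t : ℝ, ∀ x ∈ I, ∀ u : ℝ,
      X1 T t x u = 1 ∧ X1 Xt t x u = 0 ∧ X1 Ut t x u = 0 ∧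
      X2 T t x u = 0 ∧ X2 Xt t x u = 0 ∧ X2 Ut t x u = Ut t x u ∧
      X4 f g T t x u = 0 ∧ X4 f g Xt t x u = 2 ∧ X4 f g Ut t x u = 0 ∧
      X3 f g T t x u + 4 * k₁ * X1 T t x u + k₂ * X4 f g T t x u = 4 * T t x u ∧
      X3 f g Xt t x u + 4 * k₁ * X1 Xt t x u + k₂ * X4 f g Xt t x u = 2 * Xt t x u ∧
      X3 f g Ut t x u + 4 * k₁ * X1 Ut t x u + k₂ * X4 f g Ut t x u = 0 :=
  statement1_general I hIopen f g hf hg hfpos hg' k₁ k₂ k₃ T Xt Ut hT hXt hUt
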